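/- arXiv:1704.04804 — 2 statements merged into one kernel-verified Lean document; each statement's English description precedes it below -/
import Mathlib

section
/- Let V be an orthogonal preserving QSO on S with V(e_k) = F_k = (f_{k,m})_m for an orthogonal system {F_k}. Then for every x ∈ S, every k, and every m ∈ supp(F_k): V(x)_m = x_k (f_{k,m} + ∑_{i ≠ k} (2 P_{ik,m} − f_{k,m}) x_i). -/
open Function

def IsSimplexPt (x : ℕ → ℝ) : Prop := (∀ i, 0 ≤ x i) ∧ HasSum x 1

def Orth (x y : ℕ → ℝ) : Prop := Disjoint (support x) (support y)

def QSOCoef (P : ℕ → ℕ → ℕ → ℝ) : Prop :=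
  (∀ i j k, 0 ≤ P i j k) ∧ (∀ i j k, P i j k = P j i k) ∧
  (∀ i j, HasSum (fun k => P i j k) 1)

noncomputable def QSO (P : ℕ → ℕ → ℕ → ℝ) (x : ℕ → ℝ) : ℕ → ℝ :=
  fun k => ∑' i, ∑' j, P i j k * x i * x j

def IsOP (V : (ℕ → ℝ) → (ℕ → ℝ)) : Prop :=
  ∀ x y, IsSimplexPt x → IsSimplexPt y → Orth x y → Orth (V x) (V y)

def stdBasis (k : ℕ) : ℕ → ℝ := fun i => if i = k then 1 else 0

lemma mul3_le {a b c : ℝ} (ha : 0 ≤ a) (ha1 : a ≤ 1) (hb : 0 ≤ b) (hc : 0 ≤ c) :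
    a * b * c ≤ b * c := by nlinarith [mul_nonneg hb hc]

lemma pc_le_one {Pc : ℕ → ℕ → ℕ → ℝ} (hP : QSOCoef Pc) (i j k : ℕ) : Pc i j k ≤ 1 := by
  have h := Summable.le_tsum (hP.2.2 i j).summable k (fun n _ => hP.1 i j n)
  rw [(hP.2.2 i j).tsum_eq] at h
  exact h

lemma inner_summable {Pc : ℕ → ℕ → ℕ → ℝ} {x : ℕ → ℝ} (hP : QSOCoef Pc)
    (hx : IsSimplexPt x) (i m : ℕ) : Summable (fun j => Pc i j m * x i * x j) := by
  refine Summable.of_nonneg_of_le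
    (fun j => mul_nonneg (mul_nonneg (hP.1 i j m) (hx.1 i)) (hx.1 j))
    (fun j => mul3_le (hP.1 i j m) (pc_le_one hP i j m) (hx.1 i) (hx.1 j))
    (hx.2.summable.mul_left (x i))

lemma inner_le {Pc : ℕ → ℕ → ℕ → ℝ} {x : ℕ → ℝ} (hP : QSOCoef Pc)
    (hx : IsSimplexPt x) (i m : ℕ) : (∑' j, Pc i j m * x i * x j) ≤ x i := by
  calc (∑' j, Pc i j m * x i * x j) ≤ ∑' j, x i * x j := by
        exact Summable.tsum_le_tsum
          (fun j => mul3_le (hP.1 i j m) (pc_le_one hP i j m) (hx.1 i) (hx.1 j))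
          (inner_summable hP hx i m) (hx.2.summable.mul_left (x i))
    _ = x i * 1 := by rw [tsum_mul_left, hx.2.tsum_eq]
    _ = x i := mul_one _

lemma outer_summable {Pc : ℕ → ℕ → ℕ → ℝ} {x : ℕ → ℝ} (hP : QSOCoef Pc)
    (hx : IsSimplexPt x) (m : ℕ) : Summable (fun i => ∑' j, Pc i j m * x i * x j) :=
  Summable.of_nonneg_of_le
    (fun i => tsum_nonneg (fun j => mul_nonneg (mul_nonneg (hP.1 i j m) (hx.1 i)) (hx.1 j)))
    (fun i => inner_le hP hx i m) hx.2.summable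

lemma stdBasis_simplex (k : ℕ) : IsSimplexPt (stdBasis k) := by
  constructor
  · intro i; unfold stdBasis; split <;> norm_num
  · exact hasSum_ite_eq k 1

lemma qso_basis (Pc : ℕ → ℕ → ℕ → ℝ) (k m : ℕ) : QSO Pc (stdBasis k) m = Pc k k m := by
  unfold QSO
  have hin : ∀ i, (∑' j, Pc i j m * stdBasis k i * stdBasis k j)
      = Pc i k m * stdBasis k i := by
    intro i
    rw [tsum_eq_single k (fun j hj => by simp [stdBasis, hj])]
    simp [stdBasis]
  rw [tsum_congr hin, tsum_eq_single k (fun i hi => by simp [stdBasis, hi])]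
  simp [stdBasis]

lemma vanish_core {Pc : ℕ → ℕ → ℕ → ℝ} {x : ℕ → ℝ} (hP : QSOCoef Pc)
    (hxs : IsSimplexPt x) {i j m : ℕ} (hzero : QSO Pc x m = 0)
    (hxi : (1:ℝ)/2 ≤ x i) (hxj : (1:ℝ)/2 ≤ x j) : Pc i j m = 0 := by
  have h1 : Pc i j m * x i * x j ≤ ∑' j', Pc i j' m * x i * x j' :=
    Summable.le_tsum (inner_summable hP hxs i m) j
      (fun b _ => mul_nonneg (mul_nonneg (hP.1 i b m) (hxs.1 i)) (hxs.1 b))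
  have h2 : (∑' j', Pc i j' m * x i * x j') ≤ QSO Pc x m :=
    Summable.le_tsum (outer_summable hP hxs m) i
      (fun b _ => tsum_nonneg (fun c => mul_nonneg (mul_nonneg (hP.1 b c m) (hxs.1 b)) (hxs.1 c)))
  have hprod : Pc i j m * x i * x j ≤ 0 := by linarith
  have h4 : Pc i j m * ((1:ℝ)/2) * ((1:ℝ)/2) ≤ Pc i j m * x i * x j := by
    nlinarith [mul_nonneg (mul_nonneg (hP.1 i j m) (sub_nonneg.mpr hxi))
        (le_trans (by norm_num : (0:ℝ) ≤ 1/2) hxj),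
      mul_nonneg (hP.1 i j m) (sub_nonneg.mpr hxj)]
  linarith [hP.1 i j m]

lemma vanish {Pc : ℕ → ℕ → ℕ → ℝ} {F : ℕ → ℕ → ℝ} (hP : QSOCoef Pc)
    (hOP : IsOP (QSO Pc)) (hVe : ∀ k, QSO Pc (stdBasis k) = F k)
    (k m : ℕ) (hm : F k m ≠ 0) (i j : ℕ) (hi : i ≠ k) (hj : j ≠ k) : Pc i j m = 0 := by
  set x : ℕ → ℝ := fun n => (if n = i then (1:ℝ)/2 else 0) + (if n = j then 1/2 else 0) with hxdef
  have hxs : IsSimplexPt x := by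
    constructor
    · intro n; simp only [hxdef]; apply add_nonneg <;> (split <;> norm_num)
    · have := (hasSum_ite_eq i ((1:ℝ)/2)).add (hasSum_ite_eq j ((1:ℝ)/2))
      norm_num at this ⊢
      exact this
  have horthx : Orth x (stdBasis k) := by
    rw [Orth, Set.disjoint_left]
    intro n hn hnk
    have hnk' : n = k := by
      by_contra h; exact hnk (by simp [stdBasis, h])
    subst hnk'
    apply hn
    simp only [hxdef]
    rw [if_neg (fun h => hi h.symm), if_neg (fun h => hj h.symm)]
    ring
  have hdisj := hOP x (stdBasis k) hxs (stdBasis_simplex k) horthx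
  rw [hVe k] at hdisj
  have hzero : QSO Pc x m = 0 := by
    by_contra h
    exact (Set.disjoint_right.mp hdisj (mem_support.mpr hm)) (mem_support.mpr h)
  have hxi : (1:ℝ)/2 ≤ x i := by
    show (1:ℝ)/2 ≤ (if i = i then (1:ℝ)/2 else 0) + (if i = j then 1/2 else 0)
    rw [if_pos rfl]; split <;> norm_num
  have hxj : (1:ℝ)/2 ≤ x j := by
    show (1:ℝ)/2 ≤ (if j = i then (1:ℝ)/2 else 0) + (if j = j then 1/2 else 0)
    rw [if_pos rfl]; split <;> norm_num
  exact vanish_core hP hxs hzero hxi hxj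

theorem op_canonical_form (Pc : ℕ → ℕ → ℕ → ℝ) (F : ℕ → ℕ → ℝ)
    (hP : QSOCoef Pc) (hF : ∀ k, IsSimplexPt (F k))
    (horth : ∀ i j : ℕ, i ≠ j → Orth (F i) (F j))
    (hOP : IsOP (QSO Pc))
    (hVe : ∀ k, QSO Pc (stdBasis k) = F k) :
    ∀ x : ℕ → ℝ, IsSimplexPt x → ∀ k m : ℕ, m ∈ support (F k) →
      QSO Pc x m =
        x k * (F k m + ∑' i, (if i = k then 0 else (2 * Pc i k m - F k m) * x i)) := by
  intro x hx k m hm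
  rw [mem_support] at hm
  have hFkm : F k m = Pc k k m := by rw [← hVe k, qso_basis]
  have hv : ∀ i j : ℕ, i ≠ k → j ≠ k → Pc i j m = 0 :=
    fun i j hi hj => vanish hP hOP hVe k m hm i j hi hj
  have hxsum := hx.2.summable
  -- summability of a i * x i where a i = Pc i k m
  have hax : Summable (fun i => Pc i k m * x i) := by
    refine Summable.of_nonneg_of_le (fun i => mul_nonneg (hP.1 i k m) (hx.1 i))
      (fun i => ?_) hxsum
    have h1 := pc_le_one hP i k m
    have h2 := hx.1 i
    nlinarith
  set A : ℝ := ∑' i, Pc i k m * x i with hAdef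
  -- inner sums
  have key_inner : ∀ i, i ≠ k → (∑' j, Pc i j m * x i * x j) = Pc i k m * x i * x k := by
    intro i hi
    exact tsum_eq_single k (fun j hj => by rw [hv i j hi hj]; ring)
  have hfk : (∑' j, Pc k j m * x k * x j) = x k * A := by
    have : (fun j => Pc k j m * x k * x j) = (fun j => x k * (Pc j k m * x j)) := by
      funext j; rw [hP.2.1 k j m]; ring
    rw [this, tsum_mul_left]
  -- split the outer sum
  have hsplit : (fun i => ∑' j, Pc i j m * x i * x j)
      = fun i => Pc i k m * x i * x k +
          (if i = k then x k * A - Pc k k m * x k * x k else 0) := by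
    funext i
    by_cases h : i = k
    · subst h; rw [if_pos rfl, hfk]; ring
    · rw [if_neg h, key_inner i h]; ring
  have hg : Summable (fun i => Pc i k m * x i * x k) := hax.mul_right (x k)
  have hδ : Summable (fun i => if i = k then x k * A - Pc k k m * x k * x k else 0) :=
    (hasSum_ite_eq k _).summable
  have hLHS : QSO Pc x m = A * x k + (x k * A - Pc k k m * x k * x k) := by
    show (∑' i, ∑' j, Pc i j m * x i * x j) = _
    rw [tsum_congr (fun i => congrFun hsplit i), Summable.tsum_add hg hδ, tsum_mul_right,
      tsum_ite_eq]
  -- B and D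
  have hB : Summable (fun i => if i = k then 0 else Pc i k m * x i) := by
    refine Summable.of_nonneg_of_le (fun i => ?_) (fun i => ?_) hxsum
    · rcases eq_or_ne i k with h | h
      · simp [h]
      · simp only [if_neg h]; exact mul_nonneg (hP.1 i k m) (hx.1 i)
    · rcases eq_or_ne i k with h | h
      · simp only [if_pos h]; exact hx.1 i
      · simp only [if_neg h]
        have h1 := pc_le_one hP i k m
        have h2 := hx.1 i
        nlinarith
  have hD : Summable (fun i => if i = k then 0 else x i) := by
    refine Summable.of_nonneg_of_le (fun i => ?_) (fun i => ?_) hxsum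
    · rcases eq_or_ne i k with h | h
      · simp [h]
      · simp only [if_neg h]; exact hx.1 i
    · rcases eq_or_ne i k with h | h
      · simp only [if_pos h]; exact hx.1 i
      · simp only [if_neg h]; exact le_rfl
  set B : ℝ := ∑' i, (if i = k then 0 else Pc i k m * x i) with hBdef
  set D : ℝ := ∑' i, (if i = k then 0 else x i) with hDdef
  have hA : A = Pc k k m * x k + B := by
    have he : (fun i => Pc i k m * x i)
        = fun i => (if i = k then Pc k k m * x k else 0) + (if i = k then 0 else Pc i k m * x i) := by
      funext i; by_cases h : i = k
      · subst h; simp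
      · simp [h]
    rw [hAdef, tsum_congr (fun i => congrFun he i), Summable.tsum_add (hasSum_ite_eq k _).summable hB,
      tsum_ite_eq]
  have hone : (1:ℝ) = x k + D := by
    have he : x = fun i => (if i = k then x k else 0) + (if i = k then 0 else x i) := by
      funext i; by_cases h : i = k
      · subst h; simp
      · simp [h]
    conv_lhs => rw [← hx.2.tsum_eq]
    rw [tsum_congr (fun i => congrFun he i), Summable.tsum_add (hasSum_ite_eq k _).summable hD,
      tsum_ite_eq]
  have hT : (∑' i, (if i = k then 0 else (2 * Pc i k m - F k m) * x i)) = 2 * B - F k m * D := by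
    have he : (fun i => if i = k then 0 else (2 * Pc i k m - F k m) * x i)
        = fun i => 2 * (if i = k then 0 else Pc i k m * x i) - F k m * (if i = k then 0 else x i) := by
      funext i; by_cases h : i = k
      · simp [h]
      · simp only [if_neg h]; ring
    rw [tsum_congr (fun i => congrFun he i), Summable.tsum_sub (hB.mul_left 2) (hD.mul_left (F k m)),
      tsum_mul_left, tsum_mul_left]
  rw [hLHS, hT, hFkm]
  linear_combination 2 * x k * hA - Pc k k m * x k * hone
end

section
/- Let {F_k} be an orthogonal system in S with ⋃_k supp(F_k) = ℕ, and let V be an orthogonal preserving QSO with V(e_k) = F_k. Then for any subset α ⊂ ℕ, V maps the face Γ_α = {x ∈ S : x_i = 0 for all i ∉ α} into the face Γ_{α'}, where α' = ⋃_{ℓ ∈ α} supp(F_ℓ). -/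
open Function

def Face (α : Set ℕ) : Set (ℕ → ℝ) := {x | IsSimplexPt x ∧ ∀ i ∉ α, x i = 0}

/-! ### Auxiliary lemmas -/

section Aux

variable {Pc : ℕ → ℕ → ℕ → ℝ} {x : ℕ → ℝ}

private lemma full_nonneg (hP : QSOCoef Pc) (hx : ∀ i, 0 ≤ x i) :
    ∀ q : (ℕ × ℕ) × ℕ, 0 ≤ Pc q.1.1 q.1.2 q.2 * x q.1.1 * x q.1.2 :=
  fun q => mul_nonneg (mul_nonneg (hP.1 _ _ _) (hx _)) (hx _)

private lemma rows_hasSum (hP : QSOCoef Pc) (p : ℕ × ℕ) :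
    HasSum (fun k => Pc p.1 p.2 k * x p.1 * x p.2) (x p.1 * x p.2) := by
  have := (hP.2.2 p.1 p.2).mul_right (x p.1 * x p.2)
  simpa [mul_assoc] using this

private lemma g_hasSum (hx : IsSimplexPt x) :
    HasSum (fun p : ℕ × ℕ => x p.1 * x p.2) 1 := by
  have hsum : Summable (fun p : ℕ × ℕ => x p.1 * x p.2) := by
    rw [summable_prod_of_nonneg (fun p => mul_nonneg (hx.1 _) (hx.1 _))]
    constructor
    · exact fun i => (hx.2.summable).mul_left (x i)
    · have : (fun i => ∑' j, x i * x j) = fun i => x i * 1 := by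
        funext i
        rw [tsum_mul_left, hx.2.tsum_eq]
      rw [this]
      simpa using hx.2.summable
  simpa using hx.2.mul hx.2 hsum

private lemma full_hasSum (hP : QSOCoef Pc) (hx : IsSimplexPt x) :
    HasSum (fun q : (ℕ × ℕ) × ℕ => Pc q.1.1 q.1.2 q.2 * x q.1.1 * x q.1.2) 1 := by
  have hsum : Summable (fun q : (ℕ × ℕ) × ℕ => Pc q.1.1 q.1.2 q.2 * x q.1.1 * x q.1.2) := by
    rw [summable_prod_of_nonneg (full_nonneg hP hx.1)]
    constructor
    · exact fun p => (rows_hasSum hP p).summable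
    · have : (fun p : ℕ × ℕ => ∑' k, Pc p.1 p.2 k * x p.1 * x p.2)
          = fun p : ℕ × ℕ => x p.1 * x p.2 := by
        funext p
        exact (rows_hasSum hP p).tsum_eq
      rw [this]
      exact (g_hasSum hx).summable
  obtain ⟨S, hS⟩ := hsum
  have hgS : HasSum (fun p : ℕ × ℕ => x p.1 * x p.2) S :=
    hS.prod_fiberwise (fun p => rows_hasSum hP p)
  rwa [hgS.unique (g_hasSum hx)] at hS

private lemma fiber_summable (hP : QSOCoef Pc) (hx : IsSimplexPt x) (k : ℕ) :
    Summable (fun p : ℕ × ℕ => Pc p.1 p.2 k * x p.1 * x p.2) := by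
  have h := (full_hasSum hP hx).summable
  have hswap : Summable (fun q : ℕ × (ℕ × ℕ) => Pc q.2.1 q.2.2 q.1 * x q.2.1 * x q.2.2) :=
    ((Equiv.prodComm ℕ (ℕ × ℕ)).summable_iff).2 h
  exact ((summable_prod_of_nonneg
    (fun q : ℕ × (ℕ × ℕ) =>
      mul_nonneg (mul_nonneg (hP.1 _ _ _) (hx.1 _)) (hx.1 _))).1 hswap).1 k

private lemma QSO_eq (hP : QSOCoef Pc) (hx : IsSimplexPt x) (k : ℕ) :
    QSO Pc x k = ∑' p : ℕ × ℕ, Pc p.1 p.2 k * x p.1 * x p.2 := by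
  have hfib := fiber_summable hP hx k
  have hrows := ((summable_prod_of_nonneg
      (fun p : ℕ × ℕ => mul_nonneg (mul_nonneg (hP.1 _ _ _) (hx.1 _)) (hx.1 _))).1 hfib).1
  exact (Summable.tsum_prod' hfib hrows).symm

private lemma QSO_simplex (hP : QSOCoef Pc) (hx : IsSimplexPt x) :
    IsSimplexPt (QSO Pc x) := by
  constructor
  · intro k
    rw [QSO_eq hP hx k]
    exact tsum_nonneg (fun p => mul_nonneg (mul_nonneg (hP.1 _ _ _) (hx.1 _)) (hx.1 _))
  · have hfull : HasSum
        (fun q : ℕ × (ℕ × ℕ) => Pc q.2.1 q.2.2 q.1 * x q.2.1 * x q.2.2) 1 := by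
      have := (full_hasSum hP hx)
      exact ((Equiv.prodComm ℕ (ℕ × ℕ)).hasSum_iff).2 this
    refine hfull.prod_fiberwise (fun k => ?_)
    have hfib := fiber_summable hP hx k
    rw [QSO_eq hP hx k]
    exact hfib.hasSum

private lemma std_simplex (m : ℕ) : IsSimplexPt (stdBasis m) := by
  constructor
  · intro i
    unfold stdBasis
    split <;> norm_num
  · exact hasSum_ite_eq m 1

private lemma QSO_std (hP : QSOCoef Pc) (m k : ℕ) :
    QSO Pc (stdBasis m) k = Pc m m k := by
  rw [QSO_eq hP (std_simplex m) k]
  rw [tsum_eq_single (m, m)]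
  · simp [stdBasis]
  · intro p hp
    rcases Prod.ext_iff.not.1 hp with h
    have : p.1 ≠ m ∨ p.2 ≠ m := by tauto
    rcases this with h1 | h2
    · simp [stdBasis, h1]
    · simp [stdBasis, h2]

end Aux

theorem op_maps_faces (Pc : ℕ → ℕ → ℕ → ℝ) (F : ℕ → ℕ → ℝ)
    (hP : QSOCoef Pc) (hF : ∀ k, IsSimplexPt (F k))
    (horth : ∀ i j : ℕ, i ≠ j → Orth (F i) (F j))
    (hcov : (⋃ k, support (F k)) = Set.univ)
    (hOP : IsOP (QSO Pc))
    (hVe : ∀ k, QSO Pc (stdBasis k) = F k) :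
    ∀ α : Set ℕ, ∀ x ∈ Face α, QSO Pc x ∈ Face (⋃ l ∈ α, support (F l)) := by
  -- diagonal coefficients give F
  have hdiag : ∀ m k, Pc m m k = F m k := by
    intro m k
    rw [← QSO_std hP m k, hVe m]
  -- key combinatorial lemma
  have keyP : ∀ i j k : ℕ, k ∉ support (F i) → k ∉ support (F j) → Pc i j k = 0 := by
    intro i j k hki hkj
    rcases eq_or_ne i j with rfl | hij
    · have : F i k = 0 := by simpa [Function.mem_support] using hki
      rw [hdiag i k] at *
      exact this
    · -- find m with k ∈ supp (F m); necessarily m ≠ i, j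
      have hk : k ∈ (⋃ m, support (F m)) := by rw [hcov]; trivial
      obtain ⟨m, hm⟩ : ∃ m, k ∈ support (F m) := by simpa using hk
      have hmi : m ≠ i := fun h => hki (h ▸ hm)
      have hmj : m ≠ j := fun h => hkj (h ▸ hm)
      -- the midpoint of e_i and e_j
      set y : ℕ → ℝ := fun n => (stdBasis i n + stdBasis j n) / 2 with hy
      have hysimp : IsSimplexPt y := by
        constructor
        · intro n
          have := (std_simplex i).1 n
          have := (std_simplex j).1 n
          positivity
        · have := ((std_simplex i).2.add (std_simplex j).2).div_const 2
          norm_num at this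
          exact this
      have hyorth : Orth y (stdBasis m) := by
        rw [Orth, Set.disjoint_left]
        intro a ha hma
        simp only [Function.mem_support, hy] at ha
        simp only [Function.mem_support, stdBasis] at hma
        have ham : a = m := by by_contra h; simp [h] at hma
        subst ham
        apply ha
        simp [stdBasis, hmi, hmj]
      have horthV : Orth (QSO Pc y) (F m) := by
        have := hOP y (stdBasis m) hysimp (std_simplex m) hyorth
        rwa [hVe m] at this
      have hVyk : QSO Pc y k = 0 := by
        by_contra h
        exact (Set.disjoint_left.1 horthV (Function.mem_support.2 h)) hm
      -- extract the (i,j) term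
      have hfib := fiber_summable hP hysimp k
      have hterm : Pc i j k * y i * y j ≤ 0 := by
        have hle := Summable.le_tsum hfib (i, j)
          (fun q _ => mul_nonneg (mul_nonneg (hP.1 _ _ _) (hysimp.1 _)) (hysimp.1 _))
        rw [← QSO_eq hP hysimp k, hVyk] at hle
        exact hle
      have hterm0 : Pc i j k * y i * y j = 0 :=
        le_antisymm hterm (mul_nonneg (mul_nonneg (hP.1 _ _ _) (hysimp.1 _)) (hysimp.1 _))
      have hyi : y i = 1 / 2 := by simp [hy, stdBasis, hij]
      have hyj : y j = 1 / 2 := by simp [hy, stdBasis, hij.symm]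
      rw [hyi, hyj] at hterm0
      linarith
  -- main statement
  intro α x hx
  obtain ⟨hxs, hxf⟩ := hx
  refine ⟨QSO_simplex hP hxs, ?_⟩
  intro k hk
  simp only [Set.mem_iUnion, not_exists] at hk
  rw [QSO_eq hP hxs k]
  have hzero : ∀ p : ℕ × ℕ, Pc p.1 p.2 k * x p.1 * x p.2 = 0 := by
    rintro ⟨i, j⟩
    rcases eq_or_ne (x i) 0 with h | hi0
    · simp [h]
    rcases eq_or_ne (x j) 0 with h | hj0
    · simp [h]
    have hiα : i ∈ α := by by_contra h; exact hi0 (hxf i h)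
    have hjα : j ∈ α := by by_contra h; exact hj0 (hxf j h)
    have := keyP i j k (hk i hiα) (hk j hjα)
    simp [this]
  rw [tsum_congr hzero]
  exact tsum_zero
end
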